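/- For positive integers n and m, the number of m-weight file equivalence classes of Ferrers boards fitting in Δ_{n,m} is (m+1)^{n−1}. -/

import Mathlib

/-!
Adding the columns of a board one at a time gives the factorization
`∏_j (x - (j m - b_j)) = ∑_k f_{k,m}(B) x↓_{n-k,m}`: a new column of height `β` either stays
empty or carries a rook in one of its `β` rows, and the weights of these rows add up to `β - m k`.
Since the `m`-falling factorials form a basis of `ℤ[x]`, two boards are `m`-weight file
equivalent iff their root vectors `ω = (j m - b_j)_j` are rearrangements of each other.
A root vector starts at `0` and rises by at most `m` per step, and sorting it preserves both
properties; so each class contains exactly one board with weakly increasing root vector, and that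
board is determined by its `n - 1` ascents, each in `{0, …, m}`.
-/

/-- The `m`-falling factorial `x↓_{n,m} = x(x-m)(x-2m)⋯(x-(n-1)m)`. -/
def fallFact (x : ℤ) (n m : ℕ) : ℤ := ∏ i ∈ Finset.range n, (x - (m : ℤ) * i)

/-- The cells of the Ferrers board with column heights `b 0, b 1, …, b n`
(columns 0-indexed, rows 1-indexed). -/
def cells0 (b : ℕ → ℕ) (n : ℕ) : Finset (ℕ × ℕ) :=
  ((Finset.Icc 1 ((Finset.range (n + 1)).sup b)) ×ˢ Finset.range (n + 1)).filter
    fun c => c.1 ≤ b c.2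

/-- The `m`-weight of a file placement: `∏_i 1↓_{y_i,m}` where `y_i` is the number
of rooks in row `i`. -/
def wtm (m : ℕ) (F : Finset (ℕ × ℕ)) : ℤ :=
  ∏ i ∈ F.image Prod.fst, fallFact 1 ((F.filter fun c => c.1 = i).card) m

/-- `f_{k,m}(B)`: the sum of `m`-weights over all file placements (no two rooks in
the same column) of `k` rooks on the board `B = (b_0, …, b_n)`. -/
def fkm (m : ℕ) (b : ℕ → ℕ) (n k : ℕ) : ℤ :=
  ∑ F ∈ (cells0 b n).powerset.filter
      (fun F => (∀ c ∈ F, ∀ c' ∈ F, c.2 = c'.2 → c = c') ∧ F.card = k),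
    wtm m F

/-- Extend a vector of `L` column heights (columns `0,…,L-1`) to a function `ℕ → ℕ`. -/
def extBoard (L : ℕ) (v : Fin L → ℕ) : ℕ → ℕ :=
  fun j => if h : j < L then v ⟨j, h⟩ else 0

/-- The type of Ferrers boards fitting in `Δ_{n,m} = (0, m, …, (n−1)m)`:
weakly increasing vectors `(b_0,…,b_{n−1})` with `b_j ≤ jm`. -/
def SubTriangular (n m : ℕ) : Type :=
  {v : Fin n → ℕ // Monotone v ∧ ∀ j : Fin n, v j ≤ (j : ℕ) * m}

/-- `m`-weight file equivalence, as a setoid on boards fitting in `Δ_{n,m}`. -/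
def weightSetoid (n m : ℕ) : Setoid (SubTriangular n m) :=
  ⟨fun u v => ∀ k, fkm m (extBoard n u.1) (n - 1) k = fkm m (extBoard n v.1) (n - 1) k,
    ⟨fun _ _ => rfl, fun h k => (h k).symm, fun h1 h2 k => (h1 k).trans (h2 k)⟩⟩

open Finset Polynomial

/-- Unlike `cells0 b n`, only the columns `j < n` are used, so `n = 0` gives the empty board. -/
def boardCells (b : ℕ → ℕ) (n : ℕ) : Finset (ℕ × ℕ) :=
  (range n).biUnion fun j => Icc 1 (b j) ×ˢ {j}

lemma mem_boardCells {b : ℕ → ℕ} {n : ℕ} {c : ℕ × ℕ} :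
    c ∈ boardCells b n ↔ 1 ≤ c.1 ∧ c.1 ≤ b c.2 ∧ c.2 < n := by
  obtain ⟨r, j⟩ := c
  simp only [boardCells, mem_biUnion, mem_range, mem_product, mem_Icc, mem_singleton]
  constructor
  · rintro ⟨j', hj', ⟨h1, h2⟩, rfl⟩
    exact ⟨h1, h2, hj'⟩
  · rintro ⟨h1, h2, hj⟩
    exact ⟨j, hj, ⟨h1, h2⟩, rfl⟩

lemma cells0_eq_boardCells (b : ℕ → ℕ) (n : ℕ) : cells0 b n = boardCells b (n + 1) := by
  ext ⟨r, j⟩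
  simp only [cells0, mem_filter, mem_product, mem_Icc, mem_range, mem_boardCells]
  constructor
  · rintro ⟨⟨⟨h1, -⟩, hj⟩, h2⟩
    exact ⟨h1, h2, hj⟩
  · rintro ⟨h1, h2, hj⟩
    exact ⟨⟨⟨h1, h2.trans (le_sup (f := b) (mem_range.2 hj))⟩, hj⟩, h2⟩

def filePlacements (b : ℕ → ℕ) (n k : ℕ) : Finset (Finset (ℕ × ℕ)) :=
  (boardCells b n).powerset.filter
    fun F => (∀ c ∈ F, ∀ c' ∈ F, c.2 = c'.2 → c = c') ∧ F.card = k

lemma mem_filePlacements {b : ℕ → ℕ} {n k : ℕ} {F : Finset (ℕ × ℕ)} :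
    F ∈ filePlacements b n k ↔
      F ⊆ boardCells b n ∧ Set.InjOn Prod.snd (F : Set (ℕ × ℕ)) ∧ F.card = k := by
  simp only [filePlacements, mem_filter, mem_powerset]
  rfl

def fileNumber (m : ℕ) (b : ℕ → ℕ) (n k : ℕ) : ℤ :=
  ∑ F ∈ filePlacements b n k, wtm m F

lemma fkm_eq_fileNumber (m : ℕ) (b : ℕ → ℕ) (n k : ℕ) :
    fkm m b n k = fileNumber m b (n + 1) k := by
  rw [fkm, fileNumber, filePlacements, cells0_eq_boardCells]

lemma fileNumber_zero_right (m : ℕ) (b : ℕ → ℕ) (n : ℕ) : fileNumber m b n 0 = 1 := by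
  have : filePlacements b n 0 = {∅} := by
    ext F
    simp only [mem_filePlacements, card_eq_zero, mem_singleton]
    exact ⟨fun h => h.2.2, by rintro rfl; simp⟩
  simp [fileNumber, this, wtm]

lemma card_le_of_mem_filePlacements {b : ℕ → ℕ} {n k : ℕ} {F : Finset (ℕ × ℕ)}
    (hF : F ∈ filePlacements b n k) : k ≤ n := by
  obtain ⟨hcells, hinj, rfl⟩ := mem_filePlacements.1 hF
  simpa using card_le_card_of_injOn Prod.snd
    (fun c hc => mem_range.2 (mem_boardCells.1 (hcells hc)).2.2) hinj

lemma fileNumber_eq_zero_of_lt (m : ℕ) (b : ℕ → ℕ) {n k : ℕ} (h : n < k) :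
    fileNumber m b n k = 0 :=
  sum_eq_zero fun _ hF => absurd (card_le_of_mem_filePlacements hF) h.not_ge

lemma fallFact_succ (x : ℤ) (n m : ℕ) :
    fallFact x (n + 1) m = fallFact x n m * (x - m * n) := prod_range_succ _ _

/-- `1 - m y` is the last factor of `1↓_{y+1,m}`, where `y` counts the rooks of `F` in row `c.1`. -/
lemma wtm_insert (m : ℕ) {F : Finset (ℕ × ℕ)} {c : ℕ × ℕ} (hc : c ∉ F) :
    wtm m (insert c F) = wtm m F * (1 - m * #{d ∈ F | d.1 = c.1}) := by
  set rows := insert c.1 (F.image Prod.fst)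
  have hwtm : ∀ G : Finset (ℕ × ℕ), G.image Prod.fst ⊆ rows →
      wtm m G = ∏ i ∈ rows, fallFact 1 #{d ∈ G | d.1 = i} m := fun G hG =>
    prod_subset hG fun i _ hi => by
      rw [filter_eq_empty_iff.2 fun d hd hdi => hi (mem_image.2 ⟨d, hd, hdi⟩)]
      rfl
  have hrow : ∀ i, fallFact 1 #{d ∈ insert c F | d.1 = i} m = fallFact 1 #{d ∈ F | d.1 = i} m *
      if i = c.1 then (1 : ℤ) - m * #{d ∈ F | d.1 = c.1} else 1 := by
    intro i
    rw [filter_insert]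
    by_cases h : c.1 = i
    · subst h
      rw [if_pos rfl, if_pos rfl, card_insert_of_notMem fun hc' => hc (mem_filter.1 hc').1,
        fallFact_succ]
    · rw [if_neg h, if_neg (Ne.symm h), mul_one]
  rw [hwtm _ (by rw [image_insert]), hwtm _ (subset_insert _ _), prod_congr rfl fun i _ => hrow i,
    prod_mul_distrib, prod_ite_eq', if_pos (mem_insert_self _ _)]

/-- The rooks of `F` lie in rows `1, …, b n` (as `b` is maximal at `n`), and each of these rows `r`
contributes `1 - m #(rooks of F in row r)`. -/
lemma sum_wtm_insert_column (m : ℕ) {b : ℕ → ℕ} {n k : ℕ} {F : Finset (ℕ × ℕ)}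
    (hF : F ∈ filePlacements b n k) (hb : ∀ j < n, b j ≤ b n) :
    ∑ r ∈ Icc 1 (b n), wtm m (insert (r, n) F) = ((b n : ℤ) - m * k) * wtm m F := by
  obtain ⟨hcells, -, rfl⟩ := mem_filePlacements.1 hF
  have hnot : ∀ r, (r, n) ∉ F := fun r h => (mem_boardCells.1 (hcells h)).2.2.false
  have hrows : ∀ c ∈ F, c.1 ∈ Icc 1 (b n) := fun c hc => by
    obtain ⟨h1, h2, h3⟩ := mem_boardCells.1 (hcells hc)
    exact mem_Icc.2 ⟨h1, h2.trans (hb _ h3)⟩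
  simp only [wtm_insert m (hnot _), ← mul_sum, sum_sub_distrib, sum_const, Nat.card_Icc,
    ← Nat.cast_sum, ← card_eq_sum_card_fiberwise hrows]
  push_cast
  ring

lemma mem_filePlacements_succ {b : ℕ → ℕ} {n k : ℕ} {F : Finset (ℕ × ℕ)}
    (hF : F ∈ filePlacements b n k) : F ∈ filePlacements b (n + 1) k := by
  obtain ⟨hcells, hinj, hcard⟩ := mem_filePlacements.1 hF
  refine mem_filePlacements.2 ⟨fun c hc => ?_, hinj, hcard⟩
  obtain ⟨h1, h2, h3⟩ := mem_boardCells.1 (hcells hc)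
  exact mem_boardCells.2 ⟨h1, h2, h3.trans n.lt_succ_self⟩

lemma insert_mem_filePlacements_succ {b : ℕ → ℕ} {n k r : ℕ} {F : Finset (ℕ × ℕ)}
    (hF : F ∈ filePlacements b n k) (hr : r ∈ Icc 1 (b n)) :
    insert (r, n) F ∈ filePlacements b (n + 1) (k + 1) := by
  obtain ⟨hcells, hinj, hcard⟩ := mem_filePlacements.1 hF
  have hcol : ∀ c ∈ F, c.2 < n := fun c hc => (mem_boardCells.1 (hcells hc)).2.2
  have hnot : (r, n) ∉ F := fun h => (hcol _ h).false
  refine mem_filePlacements.2 ⟨?_, ?_, by rw [card_insert_of_notMem hnot, hcard]⟩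
  · rintro c hc
    rcases mem_insert.1 hc with rfl | hc
    · exact mem_boardCells.2 ⟨(mem_Icc.1 hr).1, (mem_Icc.1 hr).2, n.lt_succ_self⟩
    · exact (mem_filePlacements_succ hF |> mem_filePlacements.1).1 hc
  · rw [coe_insert, Set.injOn_insert (by simpa using hnot)]
    exact ⟨hinj, fun ⟨c, hc, hcn⟩ => (hcol c hc).ne hcn⟩

lemma erase_mem_filePlacements {b : ℕ → ℕ} {n k : ℕ} {F : Finset (ℕ × ℕ)}
    (hF : F ∈ filePlacements b (n + 1) (k + 1)) {c : ℕ × ℕ} (hc : c ∈ F) (hcn : c.2 = n) :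
    F.erase c ∈ filePlacements b n k := by
  obtain ⟨hcells, hinj, hcard⟩ := mem_filePlacements.1 hF
  refine mem_filePlacements.2 ⟨fun d hd => ?_, hinj.mono (by simp), by simp [hc, hcard]⟩
  obtain ⟨hdc, hd⟩ := mem_erase.1 hd
  obtain ⟨h1, h2, h3⟩ := mem_boardCells.1 (hcells hd)
  have : d.2 ≠ n := fun h => hdc (hinj hd hc (h.trans hcn.symm))
  exact mem_boardCells.2 ⟨h1, h2, by omega⟩

lemma filePlacements_succ_succ (b : ℕ → ℕ) (n k : ℕ) :
    filePlacements b (n + 1) (k + 1) = filePlacements b n (k + 1) ∪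
      (filePlacements b n k ×ˢ Icc 1 (b n)).image fun p => insert (p.2, n) p.1 := by
  ext F
  simp only [mem_union, mem_image, mem_product, Prod.exists]
  constructor
  · intro hF
    by_cases hcol : ∃ c ∈ F, c.2 = n
    · obtain ⟨c, hc, hcn⟩ := hcol
      obtain ⟨hcells, -, -⟩ := mem_filePlacements.1 hF
      obtain ⟨h1, h2, -⟩ := mem_boardCells.1 (hcells hc)
      refine Or.inr ⟨F.erase c, c.1, ⟨erase_mem_filePlacements hF hc hcn, ?_⟩, ?_⟩
      · exact mem_Icc.2 ⟨h1, hcn ▸ h2⟩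
      · rw [← hcn, insert_erase hc]
    · push Not at hcol
      obtain ⟨hcells, hinj, hcard⟩ := mem_filePlacements.1 hF
      refine Or.inl (mem_filePlacements.2 ⟨fun c hc => ?_, hinj, hcard⟩)
      obtain ⟨h1, h2, h3⟩ := mem_boardCells.1 (hcells hc)
      exact mem_boardCells.2 ⟨h1, h2, by have := hcol c hc; omega⟩
  · rintro (hF | ⟨F', r, ⟨hF', hr⟩, rfl⟩)
    · exact mem_filePlacements_succ hF
    · exact insert_mem_filePlacements_succ hF' hr

lemma fileNumber_succ_succ (m : ℕ) {b : ℕ → ℕ} {n : ℕ} (hb : ∀ j < n, b j ≤ b n) (k : ℕ) :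
    fileNumber m b (n + 1) (k + 1) =
      fileNumber m b n (k + 1) + ((b n : ℤ) - m * k) * fileNumber m b n k := by
  have hcol : ∀ {j k} {F : Finset (ℕ × ℕ)}, F ∈ filePlacements b n k → (j, n) ∉ F :=
    fun hF h => (mem_boardCells.1 ((mem_filePlacements.1 hF).1 h)).2.2.false
  have hdisj : Disjoint (filePlacements b n (k + 1))
      ((filePlacements b n k ×ˢ Icc 1 (b n)).image fun p => insert (p.2, n) p.1) := by
    simp only [disjoint_left, mem_image, mem_product, not_exists, not_and, Prod.forall]
    rintro F hF F' r - rfl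
    exact hcol hF (mem_insert_self _ _)
  have hinj : Set.InjOn (fun p : Finset (ℕ × ℕ) × ℕ => insert (p.2, n) p.1)
      ↑(filePlacements b n k ×ˢ Icc 1 (b n)) := by
    rintro ⟨F, r⟩ hF ⟨F', r'⟩ hF' h
    simp only [coe_product, Set.mem_prod, mem_coe] at hF hF' h
    have hr : r = r' := by
      have := h ▸ mem_insert_self (r, n) F
      rcases mem_insert.1 this with h' | h'
      · exact (Prod.mk.inj h').1
      · exact absurd h' (hcol hF'.1)
    subst hr
    rw [← erase_insert (hcol hF.1), h, erase_insert (hcol hF'.1)]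
  rw [fileNumber, filePlacements_succ_succ, sum_union hdisj, sum_image hinj, sum_product,
    fileNumber, fileNumber, mul_sum]
  congr 1
  exact sum_congr rfl fun F hF => sum_wtm_insert_column m hF hb

noncomputable def fallingPoly (m r : ℕ) : ℤ[X] :=
  ∏ i ∈ range r, (X - C ((m : ℤ) * i))

lemma fallingPoly_mul_X_sub_C (m r : ℕ) (a : ℤ) :
    fallingPoly m r * (X - C a) = fallingPoly m (r + 1) + C (m * r - a) * fallingPoly m r := by
  simp only [fallingPoly, prod_range_succ, map_sub]
  ring

lemma degree_fallingPoly (m r : ℕ) : (fallingPoly m r).degree = r := by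
  simp only [fallingPoly, degree_prod, degree_X_sub_C, sum_const, card_range, nsmul_one]

noncomputable def fallingSeq (m : ℕ) : Polynomial.Sequence ℤ :=
  ⟨fallingPoly m, degree_fallingPoly m⟩

lemma fallingSeq_apply (m r : ℕ) : fallingSeq m r = fallingPoly m r := rfl

lemma eq_of_sum_antidiagonal_C_mul_fallingPoly_eq (m n : ℕ) {c c' : ℕ → ℤ}
    (h : ∑ p ∈ antidiagonal n, C (c p.1) * fallingPoly m p.2 =
      ∑ p ∈ antidiagonal n, C (c' p.1) * fallingPoly m p.2) {k : ℕ} (hk : k ≤ n) :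
    c k = c' k := by
  have hinj : Function.Injective fun p : antidiagonal n => p.1.2 := by
    rintro ⟨⟨a, b⟩, hab⟩ ⟨⟨a', b'⟩, hab'⟩ (rfl : b = b')
    rw [HasAntidiagonal.mem_antidiagonal] at hab hab'
    obtain rfl : a = a' := by omega
    rfl
  have hsum : ∑ p : antidiagonal n, (c p.1.1 - c' p.1.1) • fallingSeq m p.1.2 = 0 := by
    rw [sum_coe_sort (antidiagonal n) fun p => (c p.1 - c' p.1) • fallingSeq m p.2]
    simpa only [sub_smul, sum_sub_distrib, smul_eq_C_mul, fallingSeq_apply, sub_eq_zero] using h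
  have := Fintype.linearIndependent_iff.1 ((fallingSeq m).linearIndependent.comp _ hinj) _ hsum
    ⟨(k, n - k), HasAntidiagonal.mem_antidiagonal.2 (by omega)⟩
  rwa [sub_eq_zero] at this

theorem prod_X_sub_C_eq_sum_fileNumber (m : ℕ) {b : ℕ → ℕ} {n : ℕ}
    (hb : MonotoneOn b (Set.Iio n)) :
    ∏ j ∈ range n, (X - C ((m : ℤ) * j - b j)) =
      ∑ p ∈ antidiagonal n, C (fileNumber m b n p.1) * fallingPoly m p.2 := by
  induction n with
  | zero => simp [fileNumber_zero_right, fallingPoly]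
  | succ n ih =>
    have hbn : ∀ j < n, b j ≤ b n := fun j hj =>
      hb (Set.mem_Iio.2 (by omega)) (Set.mem_Iio.2 n.lt_succ_self) hj.le
    have hstep : ∀ p ∈ antidiagonal n, C (fileNumber m b n p.1) * fallingPoly m p.2 *
        (X - C ((m : ℤ) * n - b n)) = C (fileNumber m b n p.1) * fallingPoly m (p.2 + 1) +
          C (((b n : ℤ) - m * p.1) * fileNumber m b n p.1) * fallingPoly m p.2 := by
      intro p hp
      have hp : (p.1 : ℤ) + p.2 = n := by exact_mod_cast HasAntidiagonal.mem_antidiagonal.1 hp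
      rw [mul_assoc, fallingPoly_mul_X_sub_C, map_mul]
      have : (m : ℤ) * p.2 - (m * n - b n) = b n - m * p.1 := by rw [← hp]; ring
      rw [this]
      ring
    have hshift : ∑ p ∈ antidiagonal n, C (fileNumber m b n p.1) * fallingPoly m (p.2 + 1) =
        fallingPoly m (n + 1) +
          ∑ p ∈ antidiagonal n, C (fileNumber m b n (p.1 + 1)) * fallingPoly m p.2 := by
      let g : ℕ × ℕ → ℤ[X] := fun p => C (fileNumber m b n p.1) * fallingPoly m p.2
      -- split the first, resp. the last, term off `∑ p ∈ antidiagonal (n + 1), g p`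
      have h1 := Nat.sum_antidiagonal_succ (n := n) (f := g)
      have h2 := Nat.sum_antidiagonal_succ' (n := n) (f := g)
      simp only [g, fileNumber_zero_right, fileNumber_eq_zero_of_lt m b n.lt_succ_self, map_one,
        map_zero, one_mul, zero_mul, zero_add] at h1 h2
      rw [← h2, h1]
    rw [prod_range_succ, ih (hb.mono (Set.Iio_subset_Iio n.le_succ)), sum_mul,
      sum_congr rfl hstep, sum_add_distrib, hshift, Nat.sum_antidiagonal_succ]
    simp only [fileNumber_zero_right, fileNumber_succ_succ m hbn, map_one, one_mul, map_add,
      add_mul, sum_add_distrib]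
    ring

lemma prod_X_sub_C_eq_map_prod (f : ℕ → ℤ) (n : ℕ) :
    ∏ j ∈ range n, (X - C (f j)) = ((univ.val.map fun j : Fin n => f j).map (X - C ·)).prod := by
  rw [← Fin.prod_univ_eq_prod_range, prod_eq_multiset_prod, Multiset.map_map]
  rfl

theorem fileNumber_eq_iff (m : ℕ) {b b' : ℕ → ℕ} {n : ℕ} (hb : MonotoneOn b (Set.Iio n))
    (hb' : MonotoneOn b' (Set.Iio n)) :
    (∀ k, fileNumber m b n k = fileNumber m b' n k) ↔
      univ.val.map (fun j : Fin n => (m : ℤ) * j - b j) =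
        univ.val.map (fun j : Fin n => (m : ℤ) * j - b' j) := by
  constructor
  · intro h
    have hprod : ∏ j ∈ range n, (X - C ((m : ℤ) * j - b j)) =
        ∏ j ∈ range n, (X - C ((m : ℤ) * j - b' j)) := by
      simp only [prod_X_sub_C_eq_sum_fileNumber m hb, prod_X_sub_C_eq_sum_fileNumber m hb', h]
    simpa only [prod_X_sub_C_eq_map_prod, roots_multiset_prod_X_sub_C] using congrArg roots hprod
  · intro h k
    rcases le_or_gt k n with hk | hk
    · refine eq_of_sum_antidiagonal_C_mul_fallingPoly_eq m n ?_ hk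
      rw [← prod_X_sub_C_eq_sum_fileNumber m hb, ← prod_X_sub_C_eq_sum_fileNumber m hb',
        prod_X_sub_C_eq_map_prod, prod_X_sub_C_eq_map_prod, h]
    · rw [fileNumber_eq_zero_of_lt m b hk, fileNumber_eq_zero_of_lt m b' hk]

section Counting

variable {N m : ℕ}

lemma exists_lt_le_add_of_le {ω : Fin (N + 1) → ℕ} (h0 : ω 0 = 0)
    (hstep : ∀ i : Fin N, ω i.succ ≤ ω i.castSucc + m) (j : Fin (N + 1)) {y : ℕ} (hy : 0 < y)
    (hyj : y ≤ ω j) : ∃ i, ω i < y ∧ y ≤ ω i + m := by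
  induction j using Fin.induction with
  | zero => omega
  | succ j ih =>
    by_cases h : y ≤ ω j.castSucc
    · exact ih h
    · exact ⟨j.castSucc, by omega, by have := hstep j; omega⟩

lemma Monotone.succ_le_castSucc_add {g : Fin (N + 1) → ℕ} (hg : Monotone g)
    (hgap : ∀ j, 0 < g j → ∃ i, g i < g j ∧ g j ≤ g i + m) (i : Fin N) :
    g i.succ ≤ g i.castSucc + m := by
  by_cases h : g i.succ ≤ g i.castSucc
  · omega
  obtain ⟨i', hlt, hle⟩ := hgap i.succ (by omega)
  have := hg (Fin.le_castSucc_iff.2 (hg.reflect_lt hlt))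
  omega

lemma partialSum_sub_eq {g : Fin (N + 1) → ℕ} (hg : Monotone g) (h0 : g 0 = 0) :
    Fin.partialSum (fun i => g i.succ - g i.castSucc) = g := by
  funext j
  induction j using Fin.induction with
  | zero => simp [h0]
  | succ j ih =>
    rw [Fin.partialSum_succ, ih]
    have := hg (Fin.castSucc_le_succ j)
    omega

lemma monotone_partialSum (d : Fin N → ℕ) : Monotone (Fin.partialSum d) :=
  Fin.monotone_iff_le_succ.2 fun i => by
    rw [Fin.partialSum_succ]
    exact Nat.le_add_right _ _

lemma Monotone.eq_of_map_univ_eq {α : Type*} [LinearOrder α] {n : ℕ} {f g : Fin n → α}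
    (hf : Monotone f) (hg : Monotone g) (h : univ.val.map f = univ.val.map g) : f = g := by
  rw [Fin.univ_val_map, Fin.univ_val_map, Multiset.coe_eq_coe] at h
  exact List.ofFn_inj.1
    (h.eq_of_sortedLE (List.sortedLE_ofFn_iff.2 hf) (List.sortedLE_ofFn_iff.2 hg))

lemma partialSum_le (d : Fin N → Fin (m + 1)) (j : Fin (N + 1)) :
    Fin.partialSum (fun i => (d i : ℕ)) j ≤ j * m := by
  induction j using Fin.induction with
  | zero => simp
  | succ j ih =>
    rw [Fin.partialSum_succ, Fin.val_succ, add_mul, one_mul]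
    exact add_le_add ih (Nat.lt_succ_iff.1 (d j).isLt)

def rootVector {n : ℕ} (u : SubTriangular n m) : Fin n → ℕ := fun j => j * m - u.1 j

def rootMultiset {n : ℕ} (u : SubTriangular n m) : Multiset ℕ := univ.val.map (rootVector u)

lemma rootVector_zero (u : SubTriangular (N + 1) m) : rootVector u 0 = 0 := by
  simp [rootVector]

lemma rootVector_succ_le (u : SubTriangular (N + 1) m) (i : Fin N) :
    rootVector u i.succ ≤ rootVector u i.castSucc + m := by
  have hmono := u.2.1 (Fin.castSucc_le_succ i)
  have hle := u.2.2 i.castSucc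
  simp only [rootVector, Fin.val_succ, Fin.val_castSucc, add_mul, one_mul] at hle ⊢
  omega

def staircase (d : Fin N → Fin (m + 1)) : SubTriangular (N + 1) m :=
  ⟨fun j => j * m - Fin.partialSum (fun i => (d i : ℕ)) j,
    Fin.monotone_iff_le_succ.2 fun i => by
      have := partialSum_le d i.castSucc
      have := (d i).isLt
      simp only [Fin.partialSum_succ, Fin.val_succ, Fin.val_castSucc, add_mul, one_mul] at this ⊢
      omega,
    fun _ => Nat.sub_le _ _⟩

lemma rootVector_staircase (d : Fin N → Fin (m + 1)) :
    rootVector (staircase d) = Fin.partialSum fun i => (d i : ℕ) :=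
  funext fun j => Nat.sub_sub_self (partialSum_le d j)

lemma injective_rootMultiset_staircase :
    Function.Injective (rootMultiset ∘ staircase : (Fin N → Fin (m + 1)) → Multiset ℕ) := by
  intro d d' h
  have hps := (monotone_partialSum _).eq_of_map_univ_eq (monotone_partialSum _)
    (by simpa only [Function.comp_apply, rootMultiset, rootVector_staircase] using h)
  funext i
  have h1 := congrFun hps i.succ
  have h2 := congrFun hps i.castSucc
  rw [Fin.partialSum_succ, Fin.partialSum_succ] at h1
  exact Fin.ext (by omega)

/-- Sorting the root vector of `u` gives the root vector of a staircase board, because sorting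
preserves the starting value `0` and the bound `m` on the ascents. -/
lemma exists_rootMultiset_staircase_eq (u : SubTriangular (N + 1) m) :
    ∃ d : Fin N → Fin (m + 1), rootMultiset (staircase d) = rootMultiset u := by
  set ω := rootVector u
  set σ := Tuple.sort ω
  have hg : Monotone (ω ∘ σ) := Tuple.monotone_sort ω
  have hω0 : ω 0 = 0 := rootVector_zero u
  have hg0 : (ω ∘ σ) 0 = 0 := by
    have := hg (Fin.zero_le (σ.symm 0))
    simp only [Function.comp_apply, Equiv.apply_symm_apply, hω0] at this
    exact Nat.le_zero.1 this
  have hstep : ∀ i : Fin N, (ω ∘ σ) i.succ ≤ (ω ∘ σ) i.castSucc + m :=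
    hg.succ_le_castSucc_add fun j hj => by
      obtain ⟨i, hi, hle⟩ :=
        exists_lt_le_add_of_le hω0 (rootVector_succ_le u) (σ j) hj le_rfl
      exact ⟨σ.symm i, by simpa using hi, by simpa using hle⟩
  refine ⟨fun i => ⟨(ω ∘ σ) i.succ - (ω ∘ σ) i.castSucc, by have := hstep i; omega⟩, ?_⟩
  rw [rootMultiset, rootVector_staircase, partialSum_sub_eq hg hg0, ← Multiset.map_map,
    Multiset.map_univ_val_equiv, rootMultiset]

lemma range_rootMultiset_staircase :
    Set.range (rootMultiset ∘ staircase : (Fin N → Fin (m + 1)) → Multiset ℕ) =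
      Set.range (rootMultiset : SubTriangular (N + 1) m → Multiset ℕ) := by
  refine (Set.range_comp_subset_range _ _).antisymm ?_
  rintro _ ⟨u, rfl⟩
  exact exists_rootMultiset_staircase_eq u

lemma map_cast_rootMultiset {n : ℕ} (u : SubTriangular n m) :
    (rootMultiset u).map (Nat.cast : ℕ → ℤ) =
      univ.val.map fun j : Fin n => (m : ℤ) * j - extBoard n u.1 j := by
  rw [rootMultiset, Multiset.map_map]
  refine Multiset.map_congr rfl fun j _ => ?_
  simp only [Function.comp_apply, rootVector, extBoard, dif_pos j.isLt, Nat.cast_sub (u.2.2 j)]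
  push_cast
  ring

lemma monotoneOn_extBoard {n : ℕ} (u : SubTriangular n m) :
    MonotoneOn (extBoard n u.1) (Set.Iio n) := by
  intro i hi j hj hij
  simp only [extBoard, dif_pos (Set.mem_Iio.1 hi), dif_pos (Set.mem_Iio.1 hj)]
  exact u.2.1 hij

lemma weightSetoid_succ_eq_ker :
    weightSetoid (N + 1) m = Setoid.ker (rootMultiset (n := N + 1) (m := m)) := by
  ext u v
  rw [Setoid.ker_def, ← (Multiset.map_injective (Nat.cast_injective (R := ℤ))).eq_iff,
    map_cast_rootMultiset, map_cast_rootMultiset,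
    ← fileNumber_eq_iff m (monotoneOn_extBoard u) (monotoneOn_extBoard v)]
  simp only [← fkm_eq_fileNumber]
  rfl

end Counting

theorem count_weight_classes_in_triangle_general (n m : ℕ) :
    Nat.card (Quotient (weightSetoid n m)) = (m + 1) ^ (n - 1) := by
  cases n with
  | zero =>
    have : Subsingleton (SubTriangular 0 m) := ⟨fun u v => Subtype.ext (funext fun j => j.elim0)⟩
    exact Nat.card_eq_one_iff_unique.2
      ⟨inferInstance, ⟨Quotient.mk _ ⟨Fin.elim0, fun i => i.elim0, fun j => j.elim0⟩⟩⟩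
  | succ N =>
    rw [weightSetoid_succ_eq_ker, Nat.card_congr (Setoid.quotientKerEquivRange _),
      ← range_rootMultiset_staircase, Nat.card_range_of_injective injective_rootMultiset_staircase]
    simp

/-- Proposition 8.3 (second statement): the number of `m`-weight file equivalence
classes of Ferrers boards fitting in `Δ_{n,m}` is `(m+1)^{n−1}`. -/
theorem count_weight_classes_in_triangle (n m : ℕ) (hn : 0 < n) (hm : 0 < m) :
    Nat.card (Quotient (weightSetoid n m)) = (m + 1) ^ (n - 1) :=
  count_weight_classes_in_triangle_general n m
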